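/- Let H be a real m × n matrix whose kernel is exactly the span of the all-ones vector 𝟙, and let i be a row index. Suppose I* ⊆ {1,…,m} contains i, satisfies rank(H(Ī*, j̄₀)) < n − 1 for some column index j₀, no strictly proper subset I' ⊊ I* satisfies rank(H(Ī', j̄₀)) < n − 1, and card(I*) is minimal among all such sets containing i. Then there exists θ* ∈ ℝⁿ with (Hθ*)_i = 1, supp(Hθ*) = I*, and card(Hθ*) ≤ card(Hθ) for every θ with (Hθ)_i = 1. -/
import Mathlib


open Matrix

/-- The support of the residual vector `Hθ`: the set of measurements with nonzero value. -/
noncomputable def resid {m n : ℕ} (H : Matrix (Fin m) (Fin n) ℝ) (θ : Fin n → ℝ) :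
    Finset (Fin m) := Finset.univ.filter fun j => H.mulVec θ j ≠ 0

/-- The submatrix `H(Ī, j̄₀)` of `H`: rows in the complement of `I`, all columns except `j₀`. -/
def subm {m n : ℕ} (H : Matrix (Fin m) (Fin n) ℝ) (I : Finset (Fin m)) (j₀ : Fin n) :
    Matrix {j : Fin m // j ∉ I} {l : Fin n // l ≠ j₀} ℝ := fun r c => H r.1 c.1

/-- Removing the measurements in `I` renders the network unobservable:
`rank (H(Ī, j̄₀)) < n - 1` for some reference column `j₀`. -/
noncomputable def Deficient {m n : ℕ} (H : Matrix (Fin m) (Fin n) ℝ)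
    (I : Finset (Fin m)) : Prop := ∃ j₀ : Fin n, (subm H I j₀).rank < n - 1

/- ------------------- auxiliary lemmas ------------------- -/

/-- Rank deficiency iff nontrivial kernel, for any real matrix. -/
lemma rank_lt_card_iff {α β : Type*} [Fintype α] [Fintype β] (M : Matrix α β ℝ) :
    M.rank < Fintype.card β ↔ ∃ x : β → ℝ, x ≠ 0 ∧ M.mulVec x = 0 := by
  classical
  have hrn : M.rank + Module.finrank ℝ (LinearMap.ker M.mulVecLin) = Fintype.card β := by
    have := LinearMap.finrank_range_add_finrank_ker M.mulVecLin
    rw [Module.finrank_fintype_fun_eq_card] at this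
    exact this
  constructor
  · intro h
    have hk : LinearMap.ker M.mulVecLin ≠ ⊥ := by
      intro hbot
      rw [hbot] at hrn
      simp [finrank_bot] at hrn
      omega
    obtain ⟨x, hx, hx0⟩ := (Submodule.ne_bot_iff _).1 hk
    exact ⟨x, hx0, hx⟩
  · rintro ⟨x, hx0, hx⟩
    have hk : LinearMap.ker M.mulVecLin ≠ ⊥ := by
      intro hbot
      have : x ∈ LinearMap.ker M.mulVecLin := by
        simpa [LinearMap.mem_ker] using hx
      rw [hbot, Submodule.mem_bot] at this
      exact hx0 this
    have hpos : 0 < Module.finrank ℝ (LinearMap.ker M.mulVecLin) := by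
      rcases Nat.eq_zero_or_pos (Module.finrank ℝ (LinearMap.ker M.mulVecLin)) with h | h
      · exact absurd (Submodule.finrank_eq_zero.1 h) hk
      · exact h
    omega

/-- Compatibility of `mulVec` for the submatrix with `mulVec` for `H`. -/
lemma subm_mulVec {m n : ℕ} (H : Matrix (Fin m) (Fin n) ℝ) (I : Finset (Fin m)) (j₀ : Fin n)
    (θ : Fin n → ℝ) (hθ : θ j₀ = 0) (r : {j : Fin m // j ∉ I}) :
    (subm H I j₀).mulVec (fun c => θ c.1) r = H.mulVec θ r.1 := by
  classical
  unfold subm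
  simp only [mulVec, dotProduct]
  have h1 : ∑ l ∈ Finset.univ.erase j₀, H r.1 l * θ l = ∑ l : Fin n, H r.1 l * θ l := by
    rw [← Finset.add_sum_erase Finset.univ (fun l => H r.1 l * θ l) (Finset.mem_univ j₀)]
    simp [hθ]
  rw [← h1]
  rw [← Finset.sum_subtype (Finset.univ.erase j₀)
    (p := fun l => l ≠ j₀) (fun x => by simp) (fun l => H r.1 l * θ l)]

/-- Deficiency characterized by existence of a residual supported in `I`. -/
lemma deficient_iff {m n : ℕ} (H : Matrix (Fin m) (Fin n) ℝ)
    (hobs : ∀ θ : Fin n → ℝ, H.mulVec θ = 0 ↔ ∃ c : ℝ, θ = fun _ => c)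
    (I : Finset (Fin m)) :
    Deficient H I ↔ ∃ θ : Fin n → ℝ, H.mulVec θ ≠ 0 ∧ resid H θ ⊆ I := by
  classical
  constructor
  · rintro ⟨j₀, hrank⟩
    have hcard : Fintype.card {l : Fin n // l ≠ j₀} = n - 1 := by
      have : Fintype.card {l : Fin n // l ≠ j₀} = Fintype.card (Fin n) - 1 := by
        rw [Fintype.card_subtype_compl (fun l => l = j₀), Fintype.card_subtype_eq]
      simpa using this
    obtain ⟨x, hx0, hx⟩ := (rank_lt_card_iff (subm H I j₀)).1 (by rw [hcard]; exact hrank)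
    set θ : Fin n → ℝ := fun l => if h : l = j₀ then 0 else x ⟨l, h⟩ with hθdef
    have hθj₀ : θ j₀ = 0 := by simp [hθdef]
    have hxθ : (fun c : {l : Fin n // l ≠ j₀} => θ c.1) = x := by
      funext c
      simp [hθdef, c.2]
    have hzero : ∀ r : Fin m, r ∉ I → H.mulVec θ r = 0 := by
      intro r hr
      have := subm_mulVec H I j₀ θ hθj₀ ⟨r, hr⟩
      rw [hxθ, hx] at this
      exact this.symm
    refine ⟨θ, ?_, ?_⟩
    · intro hHθ
      obtain ⟨c, hc⟩ := (hobs θ).1 hHθ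
      have hc0 : c = 0 := by
        have := congrFun hc j₀
        rw [hθj₀] at this
        exact this.symm
      apply hx0
      rw [← hxθ]
      funext l
      rw [hc, hc0]
      rfl
    · intro r hr
      simp only [resid, Finset.mem_filter] at hr
      by_contra hrI
      exact hr.2 (hzero r hrI)
  · rintro ⟨θ, hHθ, hsupp⟩
    have hn : 0 < n := by
      by_contra h
      push_neg at h
      interval_cases n
      apply hHθ
      funext r
      simp [mulVec, dotProduct]
    set j₀ : Fin n := ⟨0, hn⟩
    set θ' : Fin n → ℝ := fun l => θ l - θ j₀ with hθ'def
    have hHθ' : H.mulVec θ' = H.mulVec θ := by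
      have h1 : θ' = θ - (fun _ => θ j₀) := by funext l; simp [hθ'def]
      rw [h1, Matrix.mulVec_sub, (hobs (fun _ => θ j₀)).2 ⟨θ j₀, rfl⟩, sub_zero]
    have hθ'j₀ : θ' j₀ = 0 := by simp [hθ'def]
    refine ⟨j₀, ?_⟩
    have hcard : Fintype.card {l : Fin n // l ≠ j₀} = n - 1 := by
      have : Fintype.card {l : Fin n // l ≠ j₀} = Fintype.card (Fin n) - 1 := by
        rw [Fintype.card_subtype_compl (fun l => l = j₀), Fintype.card_subtype_eq]
      simpa using this
    rw [← hcard]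
    apply (rank_lt_card_iff (subm H I j₀)).2
    refine ⟨fun c => θ' c.1, ?_, ?_⟩
    · intro hx0
      apply hHθ
      rw [← hHθ']
      apply (hobs θ').2
      refine ⟨0, ?_⟩
      funext l
      by_cases h : l = j₀
      · rw [h, hθ'j₀]
      · exact congrFun hx0 (⟨l, h⟩ : {l : Fin n // l ≠ j₀})
    · funext r
      rw [subm_mulVec H I j₀ θ' hθ'j₀ r, hHθ']
      have : r.1 ∉ resid H θ := fun hr => r.2 (hsupp hr)
      simp only [resid, Finset.mem_filter, Finset.mem_univ, true_and, not_not] at this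
      exact this

lemma resid_subset_of_ne {m n : ℕ} (H : Matrix (Fin m) (Fin n) ℝ) (θ : Fin n → ℝ)
    (r : Fin m) (h : H.mulVec θ r ≠ 0) : r ∈ resid H θ := by
  simp [resid, h]

/-- For an observable network, a minimum-cardinality critical tuple `I*`
containing measurement `i` is the support of some optimal solution `θ*` of the
cardinality minimization problem `min card (Hθ)` s.t. `(Hθ)_i = 1`. -/
theorem stmt5 (m n : ℕ) (H : Matrix (Fin m) (Fin n) ℝ)
    (hobs : ∀ θ : Fin n → ℝ, H.mulVec θ = 0 ↔ ∃ c : ℝ, θ = fun _ => c)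
    (i : Fin m) (Is : Finset (Fin m))
    (hiI : i ∈ Is)
    (hdef : Deficient H Is)
    (hmin : ∀ I' ⊂ Is, ¬ Deficient H I')
    (hcard : ∀ J : Finset (Fin m), i ∈ J → Deficient H J →
      (∀ J' ⊂ J, ¬ Deficient H J') → Is.card ≤ J.card) :
    ∃ θs : Fin n → ℝ, H.mulVec θs i = 1 ∧ resid H θs = Is ∧
      ∀ θ : Fin n → ℝ, H.mulVec θ i = 1 → (resid H θs).card ≤ (resid H θ).card := by
  classical
  -- Key optimality claim, by strong induction on the support size.
  have key : ∀ k : ℕ, ∀ θ : Fin n → ℝ, H.mulVec θ i = 1 → (resid H θ).card = k →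
      Is.card ≤ k := by
    intro k
    induction k using Nat.strong_induction_on with
    | _ k ih =>
      intro θ hθi hk
      set J := resid H θ with hJ
      have hiJ : i ∈ J := resid_subset_of_ne H θ i (by rw [hθi]; norm_num)
      have hHθne : H.mulVec θ ≠ 0 := fun h => by
        rw [h] at hθi; simp at hθi
      have hJdef : Deficient H J := (deficient_iff H hobs J).2 ⟨θ, hHθne, le_refl _⟩
      -- choose a minimum-cardinality deficient subset of J
      set T := J.powerset.filter (fun J' => Deficient H J') with hT
      have hJT : J ∈ T := by simp [hT, hJdef]
      obtain ⟨J', hJ'T, hJ'min⟩ := Finset.exists_min_image T Finset.card ⟨J, hJT⟩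
      have hJ'J : J' ⊆ J := by
        have := (Finset.mem_filter.1 hJ'T).1; exact Finset.mem_powerset.1 this
      have hJ'def : Deficient H J' := (Finset.mem_filter.1 hJ'T).2
      have hJ'minimal : ∀ J'' ⊂ J', ¬ Deficient H J'' := by
        intro J'' hss hd
        have hmem : J'' ∈ T := by
          simp only [hT, Finset.mem_filter, Finset.mem_powerset]
          exact ⟨hss.subset.trans hJ'J, hd⟩
        have := hJ'min J'' hmem
        have := Finset.card_lt_card hss
        omega
      by_cases hiJ' : i ∈ J'
      · -- directly apply hcard
        calc Is.card ≤ J'.card := hcard J' hiJ' hJ'def hJ'minimal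
          _ ≤ J.card := Finset.card_le_card hJ'J
          _ = k := hk
      · -- reduce support using a vector supported in J'
        obtain ⟨x, hHx, hxsupp⟩ := (deficient_iff H hobs J').1 hJ'def
        have hHxi : H.mulVec x i = 0 := by
          by_contra h
          exact hiJ' (hxsupp (resid_subset_of_ne H x i h))
        obtain ⟨j, hj⟩ : ∃ j, H.mulVec x j ≠ 0 := by
          by_contra h
          push_neg at h
          exact hHx (funext h)
        have hjJ' : j ∈ J' := hxsupp (resid_subset_of_ne H x j hj)
        have hjJ : j ∈ J := hJ'J hjJ'
        set t := H.mulVec θ j / H.mulVec x j with ht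
        set θ'' : Fin n → ℝ := fun l => θ l - t * x l with hθ''
        have hmul : ∀ r, H.mulVec θ'' r = H.mulVec θ r - t * H.mulVec x r := by
          intro r
          have h1 : θ'' = θ - t • x := by funext l; simp [hθ'', smul_eq_mul]
          rw [h1, Matrix.mulVec_sub, Matrix.mulVec_smul]
          simp [smul_eq_mul]
        have hθ''i : H.mulVec θ'' i = 1 := by
          rw [hmul, hHxi, hθi]; ring
        have hsub : resid H θ'' ⊆ J.erase j := by
          intro r hr
          simp only [resid, Finset.mem_filter, Finset.mem_univ, true_and] at hr
          rw [Finset.mem_erase]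
          constructor
          · intro hrj
            apply hr
            rw [hrj, hmul, ht, div_mul_cancel₀ _ hj]
            ring
          · by_contra hrJ
            apply hr
            have h1 : H.mulVec θ r = 0 := by
              have : r ∉ resid H θ := hrJ
              simpa [resid] using this
            have h2 : H.mulVec x r = 0 := by
              have : r ∉ J' := fun h => hrJ (hJ'J h)
              have : r ∉ resid H x := fun h => this (hxsupp h)
              simpa [resid] using this
            rw [hmul, h1, h2]; ring
        have hlt : (resid H θ'').card < k := by
          calc (resid H θ'').card ≤ (J.erase j).card := Finset.card_le_card hsub
            _ < J.card := Finset.card_erase_lt_of_mem hjJ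
            _ = k := hk
        exact le_of_lt (lt_of_le_of_lt (ih _ hlt θ'' hθ''i rfl) hlt)
  -- Existence of θs with resid = Is
  obtain ⟨θ₀, hHθ₀, hsupp₀⟩ := (deficient_iff H hobs Is).1 hdef
  have hres_def : Deficient H (resid H θ₀) :=
    (deficient_iff H hobs (resid H θ₀)).2 ⟨θ₀, hHθ₀, le_refl _⟩
  have hres_eq : resid H θ₀ = Is := by
    by_contra h
    exact hmin (resid H θ₀) (lt_of_le_of_ne hsupp₀ h) hres_def
  have hi_res : i ∈ resid H θ₀ := hres_eq ▸ hiI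
  have ha : H.mulVec θ₀ i ≠ 0 := by
    simpa [resid] using hi_res
  set a := H.mulVec θ₀ i with haa
  set θs : Fin n → ℝ := fun l => a⁻¹ * θ₀ l with hθs
  have hmuls : ∀ r, H.mulVec θs r = a⁻¹ * H.mulVec θ₀ r := by
    intro r
    have h1 : θs = a⁻¹ • θ₀ := by funext l; simp [hθs, smul_eq_mul]
    rw [h1, Matrix.mulVec_smul]
    simp [smul_eq_mul]
  have hθsi : H.mulVec θs i = 1 := by
    rw [hmuls, ← haa, inv_mul_cancel₀ ha]
  have hressame : resid H θs = Is := by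
    rw [← hres_eq]
    ext r
    simp only [resid, Finset.mem_filter, Finset.mem_univ, true_and]
    rw [hmuls]
    constructor
    · intro h h0
      exact h (by rw [h0, mul_zero])
    · intro h h0
      exact h (by
        have := mul_eq_zero.1 h0
        rcases this with h1 | h1
        · exact absurd h1 (inv_ne_zero ha)
        · exact h1)
  refine ⟨θs, hθsi, hressame, ?_⟩
  intro θ hθi
  rw [hressame]
  exact key (resid H θ).card θ hθi rfl
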